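/- arXiv:2411.17638 — 7 statements merged into one kernel-verified Lean document; each statement's English description precedes it below -/
import Mathlib

section
/- Proposition 6.1, case i = 5: For every prime ℓ ≥ 5, the number of pairs (m, n) of positive integers with gcd(m, 6) = 1, gcd(n, 6) = 1 and ℓ = 4m² + n² equals 1 if ℓ ≡ 5 (mod 24), and equals 0 otherwise. -/
private lemma sq_mod_two (x : ℕ) : x ^ 2 % 2 = x % 2 := by
  have e := Nat.pow_mod x 2 2
  rcases Nat.mod_two_eq_zero_or_one x with h | h <;> rw [e, h]

private lemma odd_sq_mod_eight {x : ℕ} (h : x % 2 = 1) : x ^ 2 % 8 = 1 := by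
  have e := Nat.pow_mod x 2 8
  have h8 : x % 8 = 1 ∨ x % 8 = 3 ∨ x % 8 = 5 ∨ x % 8 = 7 := by omega
  rcases h8 with h | h | h | h <;> rw [e, h]

private lemma sq_mod_three_zero {x : ℕ} (h : x % 3 = 0) : x ^ 2 % 3 = 0 := by
  have e := Nat.pow_mod x 2 3
  rw [e, h]

private lemma sq_mod_three_one {x : ℕ} (h : x % 3 ≠ 0) : x ^ 2 % 3 = 1 := by
  have e := Nat.pow_mod x 2 3
  have h3 : x % 3 = 1 ∨ x % 3 = 2 := by omega
  rcases h3 with h | h <;> rw [e, h]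

private lemma coprime6_sq_mod24 {x : ℕ} (h2 : x % 2 = 1) (h3 : x % 3 ≠ 0) :
    x ^ 2 % 24 = 1 := by
  have e := Nat.pow_mod x 2 24
  have h24 : x % 24 = 1 ∨ x % 24 = 5 ∨ x % 24 = 7 ∨ x % 24 = 11 ∨
      x % 24 = 13 ∨ x % 24 = 17 ∨ x % 24 = 19 ∨ x % 24 = 23 := by omega
  rcases h24 with h | h | h | h | h | h | h | h <;> rw [e, h]

private lemma gcd6_iff (x : ℕ) : Nat.gcd x 6 = 1 ↔ x % 2 = 1 ∧ x % 3 ≠ 0 := by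
  constructor
  · intro h
    constructor
    · by_contra hx
      have h1 : (2 : ℕ) ∣ x := by omega
      have := Nat.dvd_gcd h1 (by norm_num : (2 : ℕ) ∣ 6)
      rw [h] at this; omega
    · intro hx
      have h1 : (3 : ℕ) ∣ x := by omega
      have := Nat.dvd_gcd h1 (by norm_num : (3 : ℕ) ∣ 6)
      rw [h] at this; omega
  · rintro ⟨h2, h3⟩
    have h6 : x % 6 = 1 ∨ x % 6 = 5 := by omega
    rw [Nat.gcd_comm, Nat.gcd_rec]
    rcases h6 with h | h <;> rw [h] <;> decide

set_option maxHeartbeats 1000000 in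
private lemma sum_two_sq_unique {p a b c d : ℕ} (hp : p.Prime)
    (ha : a % 2 = 1) (hc : c % 2 = 1) (hb : b % 2 = 0)
    (ha1 : 1 ≤ a) (hb1 : 1 ≤ b) (hc1 : 1 ≤ c) (hd1 : 1 ≤ d)
    (h1 : p = a ^ 2 + b ^ 2) (h2 : p = c ^ 2 + d ^ 2) :
    a = c ∧ b = d := by
  have hp' : Prime (p : ℤ) := Nat.prime_iff_prime_int.mp hp
  have hA : (1 : ℤ) ≤ (a : ℤ) := by exact_mod_cast ha1
  have hB : (1 : ℤ) ≤ (b : ℤ) := by exact_mod_cast hb1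
  have hC : (1 : ℤ) ≤ (c : ℤ) := by exact_mod_cast hc1
  have hD : (1 : ℤ) ≤ (d : ℤ) := by exact_mod_cast hd1
  have h1' : (p : ℤ) = (a : ℤ) ^ 2 + (b : ℤ) ^ 2 := by exact_mod_cast h1
  have h2' : (p : ℤ) = (c : ℤ) ^ 2 + (d : ℤ) ^ 2 := by exact_mod_cast h2
  have hP : (0 : ℤ) < (p : ℤ) := by exact_mod_cast hp.pos
  have hACge : (1 : ℤ) ≤ (a : ℤ) * c := one_le_mul_of_one_le_of_one_le hA hC
  have hBDge : (1 : ℤ) ≤ (b : ℤ) * d := one_le_mul_of_one_le_of_one_le hB hD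
  have hADge : (1 : ℤ) ≤ (a : ℤ) * d := one_le_mul_of_one_le_of_one_le hA hD
  have hBCge : (1 : ℤ) ≤ (b : ℤ) * c := one_le_mul_of_one_le_of_one_le hB hC
  have key : (p : ℤ) ∣ ((a : ℤ) * d - b * c) * ((a : ℤ) * d + b * c) :=
    ⟨(a : ℤ) ^ 2 - (c : ℤ) ^ 2, by linear_combination ((c : ℤ)) ^ 2 * h1' - ((a : ℤ)) ^ 2 * h2'⟩
  rcases hp'.dvd_mul.mp key with hdv | hdv
  · obtain ⟨k, hk⟩ := hdv
    have hsq : (p : ℤ) ^ 2 = ((a : ℤ) * c + b * d) ^ 2 + ((a : ℤ) * d - b * c) ^ 2 := by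
      linear_combination (p : ℤ) * h1' + ((a : ℤ) ^ 2 + (b : ℤ) ^ 2) * h2'
    by_cases hk0 : k = 0
    · subst hk0
      have heq : (a : ℤ) * d - b * c = 0 := by rw [hk]; ring
      have hAC : (p : ℤ) * (a : ℤ) ^ 2 = (p : ℤ) * (c : ℤ) ^ 2 := by
        linear_combination ((a : ℤ)) ^ 2 * h2' - ((c : ℤ)) ^ 2 * h1' + ((a : ℤ) * d + b * c) * heq
      have hAC2 : ((a : ℤ)) ^ 2 = ((c : ℤ)) ^ 2 := mul_left_cancel₀ (ne_of_gt hP) hAC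
      have hac : a = c := by
        have h3 : a ^ 2 = c ^ 2 := by exact_mod_cast hAC2
        exact Nat.pow_left_injective two_ne_zero h3
      refine ⟨hac, ?_⟩
      have h4 : b ^ 2 = d ^ 2 := by
        subst hac; exact Nat.add_left_cancel (h1 ▸ h2)
      exact Nat.pow_left_injective two_ne_zero h4
    · exfalso
      have hk1 : (1 : ℤ) ≤ k ^ 2 := by
        rcases lt_or_gt_of_ne hk0 with h | h <;> nlinarith
      have hsq2 : ((a : ℤ) * d - b * c) ^ 2 = (p : ℤ) ^ 2 * k ^ 2 := by rw [hk]; ring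
      have h5 : (0 : ℤ) ≤ (p : ℤ) ^ 2 * (k ^ 2 - 1) := mul_nonneg (sq_nonneg _) (by linarith)
      have h5' : (p : ℤ) ^ 2 * (k ^ 2 - 1) = (p : ℤ) ^ 2 * k ^ 2 - (p : ℤ) ^ 2 := by ring
      have h6 : (1 : ℤ) ≤ ((a : ℤ) * c + b * d) ^ 2 := by
        rw [pow_two]; exact one_le_mul_of_one_le_of_one_le (by linarith) (by linarith)
      linarith
  · obtain ⟨k, hk⟩ := hdv
    exfalso
    have hsq : (p : ℤ) ^ 2 = ((a : ℤ) * c - b * d) ^ 2 + ((a : ℤ) * d + b * c) ^ 2 := by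
      linear_combination (p : ℤ) * h1' + ((a : ℤ) ^ 2 + (b : ℤ) ^ 2) * h2'
    have hkpos : 0 < k := by
      rcases le_or_gt k 0 with h | h
      · have := mul_nonpos_of_nonneg_of_nonpos hP.le h
        linarith
      · exact h
    have hk1 : (1 : ℤ) ≤ k ^ 2 := by nlinarith
    have hsq2 : ((a : ℤ) * d + b * c) ^ 2 = (p : ℤ) ^ 2 * k ^ 2 := by rw [hk]; ring
    have h0 : ((a : ℤ) * c - b * d) ^ 2 = 0 :=
      le_antisymm (by
        have h5 : (0 : ℤ) ≤ (p : ℤ) ^ 2 * (k ^ 2 - 1) := mul_nonneg (sq_nonneg _) (by linarith)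
        have h5' : (p : ℤ) ^ 2 * (k ^ 2 - 1) = (p : ℤ) ^ 2 * k ^ 2 - (p : ℤ) ^ 2 := by ring
        linarith) (sq_nonneg _)
    have hz : (a : ℤ) * c = (b : ℤ) * d := by
      have := sq_eq_zero_iff.mp h0; linarith
    have hnat : a * c = b * d := by exact_mod_cast hz
    have e1 : a * c % 2 = 1 := by rw [Nat.mul_mod, ha, hc]
    have e2 : b * d % 2 = 0 := by rw [Nat.mul_mod, hb]; simp
    omega

/-- a member of the set forces `ℓ % 24 = 5` -/
private lemma mem_mod {ℓ m n : ℕ} (hm : Nat.gcd m 6 = 1) (hn : Nat.gcd n 6 = 1)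
    (h : ℓ = 4 * m ^ 2 + n ^ 2) : ℓ % 24 = 5 := by
  obtain ⟨hm2, hm3⟩ := (gcd6_iff m).mp hm
  obtain ⟨hn2, hn3⟩ := (gcd6_iff n).mp hn
  have e1 := coprime6_sq_mod24 hm2 hm3
  have e2 := coprime6_sq_mod24 hn2 hn3
  omega

private lemma exists_aux {ℓ x y : ℕ} (hℓ : ℓ.Prime) (h24 : ℓ % 24 = 5)
    (hx : x % 2 = 0) (hy : y % 2 = 1) (hxy : x ^ 2 + y ^ 2 = ℓ) :
    1 ≤ x / 2 ∧ 1 ≤ y ∧ Nat.gcd (x / 2) 6 = 1 ∧ Nat.gcd y 6 = 1 ∧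
      ℓ = 4 * (x / 2) ^ 2 + y ^ 2 := by
  have hxpos : 1 ≤ x := by
    by_contra hx0
    have : x = 0 := by omega
    subst this
    have hy2 : ℓ = y * y := by rw [← hxy]; ring
    rcases (Nat.Prime.eq_one_or_self_of_dvd hℓ y ⟨y, hy2⟩) with h | h
    · subst h; simp at hy2; exact absurd hy2 hℓ.ne_one
    · subst h
      have := hℓ.two_le
      nlinarith
  have heq : ℓ = 4 * (x / 2) ^ 2 + y ^ 2 := by
    have hx2 : x = 2 * (x / 2) := by omega
    rw [← hxy]
    conv_lhs => rw [hx2]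
    ring
  set m := x / 2 with hm
  have hmpos : 1 ≤ m := by omega
  -- n % 3 ≠ 0
  have hn3 : y % 3 ≠ 0 := by
    intro h3
    have e1 := sq_mod_three_zero h3
    have e2 : m ^ 2 % 3 = 0 ∨ m ^ 2 % 3 = 1 := by
      by_cases h : m % 3 = 0
      · exact Or.inl (sq_mod_three_zero h)
      · exact Or.inr (sq_mod_three_one h)
    omega
  -- m odd
  have hm2 : m % 2 = 1 := by
    have e1 := odd_sq_mod_eight hy
    have e2 := sq_mod_two m
    omega
  have hm3 : m % 3 ≠ 0 := by
    intro h3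
    have e1 := sq_mod_three_zero h3
    have e2 := sq_mod_three_one hn3
    omega
  exact ⟨hmpos, by omega, (gcd6_iff m).mpr ⟨hm2, hm3⟩, (gcd6_iff y).mpr ⟨hy, hn3⟩, heq⟩

/-- Proposition 6.1, case `i = 5`: a prime `ℓ ≥ 5` is represented as
`ℓ = 4m² + n²` with `gcd(m, 6) = gcd(n, 6) = 1`, `m, n ≥ 1`, in exactly one way
if `ℓ ≡ 5 (mod 24)`, and in no way otherwise. -/
theorem prop61_case_five (ℓ : ℕ) (hℓ : ℓ.Prime) (h5 : 5 ≤ ℓ) :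
    Set.ncard {p : ℕ × ℕ | 1 ≤ p.1 ∧ 1 ≤ p.2 ∧
        Nat.gcd p.1 6 = 1 ∧ Nat.gcd p.2 6 = 1 ∧ ℓ = 4 * p.1 ^ 2 + p.2 ^ 2} =
      if ℓ % 24 = 5 then 1 else 0 := by
  split_ifs with h24
  · -- existence
    haveI := Fact.mk hℓ
    obtain ⟨x, y, hxy⟩ := Nat.Prime.sq_add_sq (p := ℓ) (by omega)
    have hpar : x % 2 + y % 2 = 1 := by
      have e1 := sq_mod_two x
      have e2 := sq_mod_two y
      omega
    obtain ⟨m₀, n₀, hm₀, hn₀, hg₀, hg₀', heq₀⟩ :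
        ∃ m n, 1 ≤ m ∧ 1 ≤ n ∧ Nat.gcd m 6 = 1 ∧ Nat.gcd n 6 = 1 ∧
          ℓ = 4 * m ^ 2 + n ^ 2 := by
      rcases Nat.mod_two_eq_zero_or_one x with hx | hx
      · obtain ⟨a1, a2, a3, a4, a5⟩ := exists_aux hℓ h24 hx (by omega) hxy
        exact ⟨x / 2, y, a1, a2, a3, a4, a5⟩
      · obtain ⟨a1, a2, a3, a4, a5⟩ := exists_aux (x := y) (y := x) hℓ h24 (by omega) hx
          (by rw [← hxy]; ring)
        exact ⟨y / 2, x, a1, a2, a3, a4, a5⟩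
    have hset : {p : ℕ × ℕ | 1 ≤ p.1 ∧ 1 ≤ p.2 ∧
        Nat.gcd p.1 6 = 1 ∧ Nat.gcd p.2 6 = 1 ∧ ℓ = 4 * p.1 ^ 2 + p.2 ^ 2} =
        {(m₀, n₀)} := by
      ext ⟨m, n⟩
      simp only [Set.mem_setOf_eq, Set.mem_singleton_iff, Prod.mk.injEq]
      constructor
      · rintro ⟨h1, h2, h3, h4, h5'⟩
        obtain ⟨hn2, _⟩ := (gcd6_iff n).mp h4
        obtain ⟨hn2', _⟩ := (gcd6_iff n₀).mp hg₀'
        have key := sum_two_sq_unique (p := ℓ) (a := n) (b := 2 * m) (c := n₀)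
          (d := 2 * m₀) hℓ hn2 hn2' (by omega)
          h2 (by omega) hn₀ (by omega) (by rw [h5']; ring) (by rw [heq₀]; ring)
        exact ⟨by omega, key.1⟩
      · rintro ⟨rfl, rfl⟩
        exact ⟨hm₀, hn₀, hg₀, hg₀', heq₀⟩
    rw [hset, Set.ncard_singleton]
  · have hset : {p : ℕ × ℕ | 1 ≤ p.1 ∧ 1 ≤ p.2 ∧
        Nat.gcd p.1 6 = 1 ∧ Nat.gcd p.2 6 = 1 ∧ ℓ = 4 * p.1 ^ 2 + p.2 ^ 2} = ∅ := by
      rw [Set.eq_empty_iff_forall_notMem]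
      rintro ⟨m, n⟩ ⟨_, _, h3, h4, h5'⟩
      exact h24 (mem_mod h3 h4 h5')
    rw [hset, Set.ncard_empty]
end

section
/- Proposition 6.1, case i = 11: For every prime ℓ ≥ 5, the number of pairs (m, n) of positive integers with m odd, n not divisible by 3, and ℓ = 3m² + 8n² equals 1 if ℓ ≡ 11 (mod 24), and equals 0 otherwise. -/
/-!
Writing `a = 2n`, `b = m`, the pairs counted are the representations `ℓ = 2a² + 3b²` with `a, b > 0`;
for `ℓ ≡ 11 (mod 24)` such a representation automatically has `a` even, `b` odd and `3 ∤ a`, while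
conversely `m` odd and `3 ∤ n` force `ℓ ≡ 11 (mod 24)`.

Existence: for `ℓ ≡ 11 (mod 24)` both `-2` and `3` are squares mod `ℓ`, hence so is `-6`, and Thue's
lemma yields `2x² + 3y² = kℓ` with `1 ≤ k ≤ 4`. Since `ℓ ≡ 3 (mod 8)` is not of the form `x² + 6y²`,
the cases `k = 2, 3` are impossible and `k = 4` halves to a representation of `ℓ`.

Uniqueness: two representations give `ℓ² = (2ac ∓ 3bd)² + 6(ad ± bc)²` and `ℓ ∣ (ad - bc)(ad + bc)`,
which forces `ad = bc`; as `gcd(a, b) = gcd(c, d) = 1`, the two representations coincide.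
-/

theorem Prime.dvd_of_dvd_mul_sq {R : Type*} [CommMonoidWithZero R] {p u x : R} (hp : Prime p)
    (hu : ¬p ∣ u) (h : p ∣ u * x ^ 2) : p ∣ x :=
  hp.dvd_of_dvd_pow ((hp.dvd_mul.mp h).resolve_left hu)

/-- Thue's lemma, by pigeonhole on `i - c j` over the `(A + 1)(B + 1)` pairs `(i, j)`. -/
theorem ZMod.exists_intCast_eq_mul_intCast {n : ℕ} [NeZero n] (c : ZMod n) {A B : ℕ}
    (h : n < (A + 1) * (B + 1)) :
    ∃ x y : ℤ, x.natAbs ≤ A ∧ y.natAbs ≤ B ∧ (x ≠ 0 ∨ y ≠ 0) ∧ (x : ZMod n) = c * y := by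
  have hcard : Fintype.card (ZMod n) < Fintype.card (Fin (A + 1) × Fin (B + 1)) := by
    simpa [ZMod.card] using h
  obtain ⟨q, q', hne, heq⟩ := Fintype.exists_ne_map_eq_of_card_lt
    (fun q : Fin (A + 1) × Fin (B + 1) => (q.1.val : ZMod n) - c * q.2.val) hcard
  have := q.1.isLt; have := q.2.isLt; have := q'.1.isLt; have := q'.2.isLt
  refine ⟨q.1.val - q'.1.val, q.2.val - q'.2.val, by omega, by omega, ?_, ?_⟩
  · by_contra! h0
    exact hne (Prod.ext (Fin.ext (by omega)) (Fin.ext (by omega)))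
  · push_cast
    linear_combination heq

theorem ZMod.exists_two_mul_sq_add_three_eq_zero {p : ℕ} [Fact p.Prime] (hp : p % 24 = 11) :
    ∃ c : ZMod p, 2 * c ^ 2 + 3 = 0 := by
  have h_neg_two : IsSquare (-2 : ZMod p) :=
    (ZMod.exists_sq_eq_neg_two_iff (by omega)).mpr (by omega)
  have h_three : IsSquare ((3 : ℕ) : ZMod p) := by
    have h_two_mod_three : ¬IsSquare (2 : ZMod 3) := by decide
    have : Fact (Nat.Prime 3) := ⟨Nat.prime_three⟩
    rw [ZMod.exists_sq_eq_prime_iff_of_mod_four_eq_three (by omega) (by norm_num) (by omega),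
      ← ZMod.natCast_mod, show p % 3 = 2 by omega]
    exact_mod_cast h_two_mod_three
  obtain ⟨u, hu⟩ := h_three.mul h_neg_two
  have h2 : (2 : ZMod p) ≠ 0 := Ring.two_ne_zero (by rw [ZMod.ringChar_zmod_n]; omega)
  refine ⟨u / 2, ?_⟩
  field_simp
  push_cast at hu
  linear_combination -hu

theorem Int.sq_add_six_mul_sq_ne {n : ℤ} (hn : n % 8 = 3) (x y : ℤ) : x ^ 2 + 6 * y ^ 2 ≠ n := by
  intro h
  have hmod8 : ∀ u v : ZMod 8, u ^ 2 + 6 * v ^ 2 ≠ 3 := by decide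
  apply hmod8 x y
  have := congrArg (Int.cast : ℤ → ZMod 8) h
  push_cast at this
  rw [this, ← ZMod.intCast_mod n 8, Nat.cast_ofNat, hn]
  rfl

theorem Nat.Prime.exists_two_mul_sq_add_three_mul_sq_dvd {p : ℕ} (hp : p.Prime) (c : ZMod p)
    (hc : 2 * c ^ 2 + 3 = 0) :
    ∃ x y : ℤ, 0 < 2 * x ^ 2 + 3 * y ^ 2 ∧ 2 * x ^ 2 + 3 * y ^ 2 < 5 * p ∧
      (p : ℤ) ∣ 2 * x ^ 2 + 3 * y ^ 2 := by
  have : NeZero p := ⟨hp.ne_zero⟩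
  set s := p.sqrt
  have hs : (s : ℤ) ^ 2 < p := by
    have hne : s ^ 2 ≠ p := fun h => (Nat.prime_iff.mp hp).not_isSquare ⟨s, by rw [← h, sq]⟩
    exact_mod_cast lt_of_le_of_ne (Nat.sqrt_le' p) hne
  obtain ⟨x, y, hx, hy, hxy, hcong⟩ :=
    ZMod.exists_intCast_eq_mul_intCast c (A := s) (B := s) (by simpa [sq] using p.lt_succ_sqrt')
  have hx2 : x ^ 2 ≤ (s : ℤ) ^ 2 := by
    rw [← Int.natAbs_sq]; exact_mod_cast Nat.pow_le_pow_left hx 2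
  have hy2 : y ^ 2 ≤ (s : ℤ) ^ 2 := by
    rw [← Int.natAbs_sq]; exact_mod_cast Nat.pow_le_pow_left hy 2
  refine ⟨x, y, by rcases hxy with h | h <;> positivity, by linarith, ?_⟩
  rw [← ZMod.intCast_zmod_eq_zero_iff_dvd]
  push_cast
  rw [hcong]
  linear_combination (y : ZMod p) ^ 2 * hc

theorem Int.exists_eq_two_mul_sq_add_three_mul_sq_of_dvd {n x y : ℤ} (hn : n % 8 = 3)
    (hpos : 0 < 2 * x ^ 2 + 3 * y ^ 2) (hlt : 2 * x ^ 2 + 3 * y ^ 2 < 5 * n)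
    (hdvd : n ∣ 2 * x ^ 2 + 3 * y ^ 2) : ∃ a b : ℤ, n = 2 * a ^ 2 + 3 * b ^ 2 := by
  obtain ⟨k, hk⟩ := hdvd
  have hn0 : 0 < n := by omega
  have hk1 : 1 ≤ k := by nlinarith
  have hk4 : k ≤ 4 := by nlinarith
  interval_cases k
  · exact ⟨x, y, by linarith⟩
  · obtain ⟨d, rfl⟩ := Int.prime_two.dvd_of_dvd_mul_sq (u := 3) (x := y) (by norm_num)
      ⟨n - x ^ 2, by linarith⟩
    exact absurd (by linarith) (sq_add_six_mul_sq_ne hn x d)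
  · obtain ⟨e, rfl⟩ := Int.prime_three.dvd_of_dvd_mul_sq (u := 2) (x := x) (by norm_num)
      ⟨n - y ^ 2, by linarith⟩
    exact absurd (by linarith) (sq_add_six_mul_sq_ne hn y e)
  · obtain ⟨d, rfl⟩ := Int.prime_two.dvd_of_dvd_mul_sq (u := 3) (x := y) (by norm_num)
      ⟨2 * n - x ^ 2, by linarith⟩
    obtain ⟨e, rfl⟩ := Int.prime_two.dvd_of_dvd_pow (n := 2) (a := x) ⟨n - 3 * d ^ 2, by linarith⟩
    exact ⟨e, d, by linarith⟩

theorem Nat.Prime.exists_eq_two_mul_sq_add_three_mul_sq {p : ℕ} (hp : p.Prime) (h : p % 24 = 11) :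
    ∃ a b : ℕ, p = 2 * a ^ 2 + 3 * b ^ 2 := by
  have : Fact p.Prime := ⟨hp⟩
  obtain ⟨c, hc⟩ := ZMod.exists_two_mul_sq_add_three_eq_zero h
  obtain ⟨x, y, hpos, hlt, hdvd⟩ := hp.exists_two_mul_sq_add_three_mul_sq_dvd c hc
  obtain ⟨a, b, hab⟩ := Int.exists_eq_two_mul_sq_add_three_mul_sq_of_dvd (by omega) hpos hlt hdvd
  refine ⟨a.natAbs, b.natAbs, ?_⟩
  zify
  simpa [sq_abs] using hab

theorem Int.isCoprime_of_squarefree_mul_sq_add_mul_sq {u v a b : ℤ}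
    (h : Squarefree (u * a ^ 2 + v * b ^ 2)) : IsCoprime a b := by
  rw [Int.isCoprime_iff_gcd_eq_one]
  have hg : (a.gcd b : ℤ) * a.gcd b ∣ u * a ^ 2 + v * b ^ 2 := by
    rw [← sq]
    exact dvd_add ((pow_dvd_pow_of_dvd (Int.gcd_dvd_left a b) 2).mul_left u)
      ((pow_dvd_pow_of_dvd (Int.gcd_dvd_right a b) 2).mul_left v)
  exact Nat.isUnit_iff.mp (Int.ofNat_isUnit.mp (h _ hg))

theorem Int.eq_and_eq_of_two_mul_sq_add_three_mul_sq {p a b c d : ℤ} (hp : Prime p)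
    (ha : 0 < a) (hb : 0 < b) (hc : 0 < c) (hd : 0 < d)
    (hab : p = 2 * a ^ 2 + 3 * b ^ 2) (hcd : p = 2 * c ^ 2 + 3 * d ^ 2) : a = c ∧ b = d := by
  have hp_sq₁ : p ^ 2 = (2 * a * c - 3 * b * d) ^ 2 + 6 * (a * d + b * c) ^ 2 := by
    linear_combination p * hcd + (2 * c ^ 2 + 3 * d ^ 2) * hab
  have hp_sq₂ : p ^ 2 = (2 * a * c + 3 * b * d) ^ 2 + 6 * (a * d - b * c) ^ 2 := by
    linear_combination p * hcd + (2 * c ^ 2 + 3 * d ^ 2) * hab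
  have hdvd : p ∣ (a * d - b * c) * (a * d + b * c) := by
    have h2 : p ∣ 2 * ((a * d - b * c) * (a * d + b * c)) :=
      ⟨d ^ 2 - b ^ 2, by linear_combination b ^ 2 * hcd - d ^ 2 * hab⟩
    refine (hp.dvd_mul.mp h2).resolve_left fun h => ?_
    have := Int.le_of_dvd two_pos h
    nlinarith
  have hcross : a * d = b * c := by
    rcases hp.dvd_mul.mp hdvd with h | h
    · refine sub_eq_zero.mp (Int.eq_zero_of_dvd_of_natAbs_lt_natAbs h ?_)
      rw [Int.natAbs_lt_iff_sq_lt]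
      nlinarith [mul_pos ha hc, mul_pos hb hd]
    · refine absurd (Int.eq_zero_of_dvd_of_natAbs_lt_natAbs h ?_) (by positivity)
      rw [Int.natAbs_lt_iff_sq_lt]
      nlinarith [mul_pos ha hd, mul_pos hb hc]
  have hsf : Squarefree p := hp.squarefree
  refine Rat.div_int_inj hb hd
    (Int.isCoprime_iff_gcd_eq_one.mp (Int.isCoprime_of_squarefree_mul_sq_add_mul_sq (hab ▸ hsf)))
    (Int.isCoprime_iff_gcd_eq_one.mp (Int.isCoprime_of_squarefree_mul_sq_add_mul_sq (hcd ▸ hsf))) ?_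
  rw [div_eq_div_iff (by positivity) (by positivity)]
  exact_mod_cast hcross.trans (mul_comm b c)

theorem Nat.mod_twentyFour_eq_eleven_of_eq {ℓ m n : ℕ} (hm : Odd m) (hn : ¬3 ∣ n)
    (h : ℓ = 3 * m ^ 2 + 8 * n ^ 2) : ℓ % 24 = 11 := by
  have hm2 := Nat.eight_dvd_sq_sub_one_of_odd hm
  have hm1 : 1 ≤ m ^ 2 := Nat.one_le_pow _ _ hm.pos
  have hn2 : n ^ 2 % 3 = 1 := by
    rcases (by omega : n % 3 = 1 ∨ n % 3 = 2) with h | h <;> simp [Nat.pow_mod, h]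
  omega

theorem Nat.odd_and_not_three_dvd_of_eq {ℓ m n : ℕ} (hℓ : ℓ % 24 = 11)
    (h : ℓ = 3 * m ^ 2 + 8 * n ^ 2) : Odd m ∧ ¬3 ∣ n := by
  constructor
  · have : Odd (3 * m ^ 2 + 8 * n ^ 2) := h ▸ Nat.odd_iff.mpr (by omega)
    grind
  · rintro ⟨k, rfl⟩
    have : ℓ = 3 * (m ^ 2 + 24 * k ^ 2) := by rw [h]; ring
    omega

theorem Nat.even_of_eq_two_mul_sq_add_three_mul_sq {ℓ a b : ℕ} (hℓ : ℓ % 8 = 3)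
    (h : ℓ = 2 * a ^ 2 + 3 * b ^ 2) : Even a := by
  have hb : Odd b := by
    have : Odd (2 * a ^ 2 + 3 * b ^ 2) := h ▸ Nat.odd_iff.mpr (by omega)
    grind
  have hb2 := Nat.eight_dvd_sq_sub_one_of_odd hb
  have hb1 : 1 ≤ b ^ 2 := Nat.one_le_pow _ _ hb.pos
  by_contra ha
  have ha2 := Nat.eight_dvd_sq_sub_one_of_odd (Nat.not_even_iff_odd.mp ha)
  have ha1 : 1 ≤ a ^ 2 := Nat.one_le_pow _ _ (Nat.not_even_iff_odd.mp ha).pos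
  omega

theorem prop61_case_eleven_general (ℓ : ℕ) (hℓ : ℓ.Prime) :
    Set.ncard {p : ℕ × ℕ | 1 ≤ p.1 ∧ 1 ≤ p.2 ∧
        Odd p.1 ∧ ¬ (3 ∣ p.2) ∧ ℓ = 3 * p.1 ^ 2 + 8 * p.2 ^ 2} =
      if ℓ % 24 = 11 then 1 else 0 := by
  split_ifs with h24
  · obtain ⟨a, b, hab⟩ := hℓ.exists_eq_two_mul_sq_add_three_mul_sq h24
    obtain ⟨n, rfl⟩ := (Nat.even_of_eq_two_mul_sq_add_three_mul_sq (by omega) hab).two_dvd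
    have hrep : ℓ = 3 * b ^ 2 + 8 * n ^ 2 := by rw [hab]; ring
    obtain ⟨hb, hn⟩ := Nat.odd_and_not_three_dvd_of_eq h24 hrep
    have hn0 : 0 < n := Nat.pos_of_ne_zero (by rintro rfl; exact hn (dvd_zero 3))
    refine Set.ncard_eq_one.mpr ⟨(b, n), Set.eq_singleton_iff_unique_mem.mpr ⟨?_, ?_⟩⟩
    · exact ⟨hb.pos, hn0, hb, hn, hrep⟩
    · rintro ⟨m, k⟩ ⟨hm, hk, -, -, h⟩
      have := Int.eq_and_eq_of_two_mul_sq_add_three_mul_sq (Nat.prime_iff_prime_int.mp hℓ)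
        (a := 2 * k) (b := m) (c := 2 * n) (d := b) (by omega) (by omega) (by omega)
        (by exact_mod_cast hb.pos) (by rw [h]; push_cast; ring) (by rw [hab]; push_cast; ring)
      simp only [Prod.mk.injEq]
      omega
  · convert Set.ncard_empty (ℕ × ℕ)
    exact Set.eq_empty_of_forall_notMem fun p hp =>
      h24 (Nat.mod_twentyFour_eq_eleven_of_eq hp.2.2.1 hp.2.2.2.1 hp.2.2.2.2)

/-- Proposition 6.1, case `i = 11`: a prime `ℓ ≥ 5` is represented as
`ℓ = 3m² + 8n²` with `m` odd, `3 ∤ n`, `m, n ≥ 1`, in exactly one way if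
`ℓ ≡ 11 (mod 24)`, and in no way otherwise. -/
theorem prop61_case_eleven (ℓ : ℕ) (hℓ : ℓ.Prime) (h5 : 5 ≤ ℓ) :
    Set.ncard {p : ℕ × ℕ | 1 ≤ p.1 ∧ 1 ≤ p.2 ∧
        Odd p.1 ∧ ¬ (3 ∣ p.2) ∧ ℓ = 3 * p.1 ^ 2 + 8 * p.2 ^ 2} =
      if ℓ % 24 = 11 then 1 else 0 :=
  prop61_case_eleven_general ℓ hℓ
end

section
/- Mod-2 q-expansion of C (equation (3.2), from Lemma 2.2): For all natural numbers N ≥ 1 and all m with 1 ≤ m ≤ 3N, the coefficient of X^m in the polynomial X · ∏_{n=1}^{N} (1 − X^{3n})^{8} over ZMod 2 equals 1 if and only if m = k² for some odd natural number k not divisible by 3. -/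
/-!
Over `ZMod 2` the Frobenius gives `(1 - X^(3n))^8 = 1 - X^(24n)`, so the product is the truncated
Euler product `∏_{n ≤ N} (1 - X^n)` evaluated at `X^24`, and the truncation does not affect the
coefficients of degree `≤ N`. By the pentagonal number theorem these coefficients are, mod 2, the
indicator of the pentagonal numbers `j(3j-1)/2`, and `24 · j(3j-1)/2 + 1 = (6j-1)^2`, where
`|6j - 1|` runs over exactly the natural numbers prime to `6`.
-/

open Polynomial

theorem ZMod.expand_pow_eq_pow {p : ℕ} [Fact p.Prime] (n : ℕ) (f : (ZMod p)[X]) :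
    expand (ZMod p) (p ^ n) f = f ^ p ^ n := by
  induction n generalizing f with
  | zero => simp
  | succ n ih => rw [pow_succ, expand_mul, ZMod.expand_card, ih, ← pow_mul, mul_comm]

theorem prod_one_sub_X_pow_three_mul_pow_eight (s : Finset ℕ) :
    ∏ n ∈ s, ((1 : (ZMod 2)[X]) - X ^ (3 * n)) ^ 8 =
      expand (ZMod 2) 24 (∏ n ∈ s, (1 - X ^ n)) := by
  rw [map_prod]
  refine Finset.prod_congr rfl fun n _ => ?_
  rw [show 24 = 2 ^ 3 * 3 by norm_num, expand_mul, ZMod.expand_pow_eq_pow]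
  simp [pow_mul]

theorem Nat.sq_mod_24_eq_one_of_odd {k : ℕ} (hk : Odd k) (hk3 : ¬ 3 ∣ k) : k ^ 2 % 24 = 1 := by
  rw [Nat.odd_iff] at hk
  rw [Nat.pow_mod]
  have : k % 24 < 24 := Nat.mod_lt _ (by norm_num)
  interval_cases h : k % 24 <;> omega

theorem mem_range_pentagonal_iff (s : ℕ) :
    s ∈ Set.range pentagonal ↔ ∃ k : ℕ, Odd k ∧ ¬ 3 ∣ k ∧ 24 * s + 1 = k ^ 2 := by
  constructor
  · rintro ⟨j, rfl⟩
    refine ⟨(6 * j - 1).natAbs, by rw [Nat.odd_iff]; omega, by omega, ?_⟩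
    zify
    rw [sq_abs]
    linear_combination 12 * two_mul_natCast_pentagonal j
  · rintro ⟨k, hk, hk3, hsq⟩
    rw [Nat.odd_iff] at hk
    obtain ⟨j, hj⟩ : ∃ j : ℤ, (k : ℤ) = |6 * j - 1| := by
      rcases (by omega : k % 6 = 1 ∨ k % 6 = 5) with h | h
      · exact ⟨-(k / 6 : ℕ), by rw [abs_of_neg (by omega)]; omega⟩
      · exact ⟨(k / 6 : ℕ) + 1, by rw [abs_of_pos (by omega)]; omega⟩
    refine ⟨j, ?_⟩
    have hsq' : (24 * s + 1 : ℤ) = k ^ 2 := by exact_mod_cast hsq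
    rw [hj, sq_abs] at hsq'
    have := two_mul_natCast_pentagonal j
    zify
    linarith

theorem PowerSeries.coeff_pentagonalSeries_zmod_two_eq_one_iff {n : ℕ} :
    (pentagonalSeries (ZMod 2)).coeff n = 1 ↔ n ∈ Set.range pentagonal := by
  have h : ∀ x : ZMod 2, x = 1 ↔ x ≠ 0 := by decide
  rw [h, Ne, coeff_pentagonalSeries_eq_zero_iff, not_not]

theorem Finset.dvd_prod_sub_one {ι R : Type*} [CommRing R] {s : Finset ι} {f : ι → R} {a : R}
    (h : ∀ i ∈ s, a ∣ f i - 1) : a ∣ ∏ i ∈ s, f i - 1 := by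
  refine Finset.prod_induction f (fun x => a ∣ x - 1) (fun x y hx hy => ?_) (by simp) h
  rw [show x * y - 1 = x * (y - 1) + (x - 1) by ring]
  exact dvd_add (dvd_mul_of_dvd_right hy x) hx

namespace PowerSeries

variable {R : Type*} [CommRing R]

theorem coeff_prod_one_sub_X_pow_eq_of_subset {s t : Finset ℕ} (hst : s ⊆ t) {n : ℕ}
    (hn : ∀ i ∈ t \ s, n ≤ i) :
    (∏ i ∈ t, (1 - X ^ (i + 1) : R⟦X⟧)).coeff n =
      (∏ i ∈ s, (1 - X ^ (i + 1) : R⟦X⟧)).coeff n := by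
  classical
  obtain ⟨g, hg⟩ : X ^ (n + 1) ∣ ∏ i ∈ t \ s, (1 - X ^ (i + 1) : R⟦X⟧) - 1 :=
    Finset.dvd_prod_sub_one fun i hi => by
      simpa using (pow_dvd_pow X (Nat.succ_le_succ (hn i hi))).neg_right
  rw [← Finset.prod_sdiff hst, eq_add_of_sub_eq hg, add_mul, one_mul, map_add, mul_assoc,
    coeff_X_pow_mul', if_neg (by omega), zero_add]

theorem coeff_prod_range_one_sub_X_pow {N n : ℕ} (hn : n ≤ N) :
    (∏ i ∈ Finset.range N, (1 - X ^ (i + 1) : R⟦X⟧)).coeff n =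
      (pentagonalSeries R).coeff n := by
  obtain ⟨t, ht⟩ := Filter.eventually_atTop.1 (coeff_prod_one_sub_X_pow_eventually_eq R n)
  rw [← ht (t ∪ Finset.range N) Finset.subset_union_left,
    coeff_prod_one_sub_X_pow_eq_of_subset Finset.subset_union_right]
  intro i hi
  simp only [Finset.mem_sdiff, Finset.mem_range] at hi
  omega

end PowerSeries

theorem Polynomial.coeff_prod_Icc_one_sub_X_pow {R : Type*} [CommRing R] {N n : ℕ}
    (hn : n ≤ N) :
    (∏ i ∈ Finset.Icc 1 N, (1 - X ^ i : R[X])).coeff n =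
      (PowerSeries.pentagonalSeries R).coeff n := by
  rw [← coeff_coe, ← PowerSeries.coeff_prod_range_one_sub_X_pow hn,
    ← Finset.Ico_add_one_right_eq_Icc, Finset.prod_Ico_eq_prod_range, Nat.add_sub_cancel,
    ← coeToPowerSeries.ringHom_apply, map_prod]
  simp [add_comm]

theorem c_mod_two_expansion_general (N : ℕ) (m : ℕ) (hm1 : 1 ≤ m)
    (hmN : m ≤ 3 * N) :
    (X * ∏ n ∈ Finset.Icc 1 N,
        ((1 : Polynomial (ZMod 2)) - X ^ (3 * n)) ^ 8).coeff m = 1 ↔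
      ∃ k : ℕ, Odd k ∧ ¬ (3 ∣ k) ∧ m = k ^ 2 := by
  obtain ⟨m, rfl⟩ : ∃ m', m = m' + 1 := ⟨m - 1, by omega⟩
  rw [prod_one_sub_X_pow_three_mul_pow_eight, coeff_X_mul, coeff_expand (by norm_num)]
  split_ifs with h24
  · obtain ⟨s, rfl⟩ := h24
    rw [Nat.mul_div_cancel_left _ (by norm_num), coeff_prod_Icc_one_sub_X_pow (by omega),
      PowerSeries.coeff_pentagonalSeries_zmod_two_eq_one_iff, mem_range_pentagonal_iff]
  · simp only [zero_ne_one, false_iff, not_exists, not_and]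
    intro k hk hk3 hsq
    have := Nat.sq_mod_24_eq_one_of_odd hk hk3
    omega

/-- Mod-2 `q`-expansion of `C = η(3τ)^8`: the coefficient of `X^m` (for
`1 ≤ m ≤ 3N`) in `X · ∏_{n=1}^{N} (1 − X^{3n})^{8}` over `ZMod 2` is `1` iff `m`
is the square of an odd natural number not divisible by `3`. -/
theorem c_mod_two_expansion (N : ℕ) (hN : 1 ≤ N) (m : ℕ) (hm1 : 1 ≤ m)
    (hmN : m ≤ 3 * N) :
    (X * ∏ n ∈ Finset.Icc 1 N,
        ((1 : Polynomial (ZMod 2)) - X ^ (3 * n)) ^ 8).coeff m = 1 ↔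
      ∃ k : ℕ, Odd k ∧ ¬ (3 ∣ k) ∧ m = k ^ 2 :=
  c_mod_two_expansion_general N m hm1 hmN
end

section
/- Proposition 4.10 (pseudorepresentations on powers via Chebyshev/Dickson polynomials): Let Γ be a group, B a commutative ring, and t : Γ → B a function satisfying t(1) = 2, t(gh) = t(hg) for all g, h ∈ Γ, and t(gh) + t(g⁻¹h) = t(g)·t(h) for all g, h ∈ Γ. Then for every g ∈ Γ and every integer n, t(gⁿ) = S_{|n|}(t(g)), where S_k denotes the Dickson polynomial Polynomial.dickson 1 1 k evaluated at t(g). -/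
/-- Proposition 4.10: if `t : Γ → B` is a pseudorepresentation of dimension 2 and
determinant 1 in the sense of Chenevier, then `t(gⁿ) = S_{|n|}(t(g))`, where `S_k`
is the Dickson polynomial of the first kind with parameter 1 (the modified
Chebyshev polynomial). -/
theorem pseudorep_zpow_dickson {Γ : Type*} [Group Γ] {B : Type*} [CommRing B]
    (t : Γ → B) (h1 : t 1 = 2)
    (hcentral : ∀ g h : Γ, t (g * h) = t (h * g))
    (htracedet : ∀ g h : Γ, t (g * h) + t (g⁻¹ * h) = t g * t h) :
    ∀ (g : Γ) (n : ℤ),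
      t (g ^ n) = (Polynomial.dickson 1 (1 : B) n.natAbs).eval (t g) := by
  intro g n
  have hinv : ∀ x : Γ, t x⁻¹ = t x := by
    intro x
    have := htracedet x 1
    simp only [mul_one, h1] at this
    linear_combination this
  have hnat : ∀ m : ℕ, t (g ^ m) = (Polynomial.dickson 1 (1 : B) m).eval (t g) := by
    have key : ∀ m : ℕ, t (g ^ m) = (Polynomial.dickson 1 (1 : B) m).eval (t g) ∧
        t (g ^ (m + 1)) = (Polynomial.dickson 1 (1 : B) (m + 1)).eval (t g) := by
      intro m
      induction m with
      | zero => simp [h1, Polynomial.dickson_zero, Polynomial.dickson_one]; norm_num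
      | succ k ih =>
        refine ⟨ih.2, ?_⟩
        have hd := htracedet g (g ^ (k + 1))
        have h1' : g * g ^ (k + 1) = g ^ (k + 2) := by group
        have h2' : g⁻¹ * g ^ (k + 1) = g ^ k := by group
        rw [h1', h2', ih.1, ih.2] at hd
        rw [Polynomial.dickson_add_two]
        simp only [Polynomial.eval_sub, Polynomial.eval_mul, Polynomial.eval_X,
          Polynomial.eval_C]
        linear_combination hd
    exact fun m => (key m).1
  rcases Int.natAbs_eq n with h | h
  · rw [h, zpow_natCast, hnat, Int.natAbs_natCast]
  · rw [h, zpow_neg, zpow_natCast, hinv, hnat]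
    rw [Int.natAbs_neg, Int.natAbs_natCast]
end

section
/- Lemma 4.8 (squares and the kernel of a pseudorepresentation, characteristic 2): Let Γ be a group and B a commutative ring of characteristic 2, and let t : Γ → B satisfy t(1) = 2, t(gh) = t(hg) for all g, h, and t(gh) + t(g⁻¹h) = t(g)·t(h) for all g, h. Then for every γ ∈ Γ: (1) if t(γ) = 0 then γ² lies in ker t, i.e. t(γ²·u) = t(u) for all u ∈ Γ; and (2) conversely, if t(γ²·u) = t(u) for all u ∈ Γ, then t(γ)·t(h) = 0 for every h ∈ Γ, i.e. t(γ) annihilates the ideal of B generated by the image t(Γ). -/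
/-- Lemma 4.8: for a pseudorepresentation `t : Γ → B` over a ring of
characteristic 2: if `t(γ) = 0` then `γ²` lies in `ker t`; conversely, if
`γ² ∈ ker t` then `t(γ)` annihilates the ideal generated by the image of `t`. -/
theorem pseudorep_square_kernel {Γ : Type*} [Group Γ] {B : Type*} [CommRing B]
    [CharP B 2] (t : Γ → B) (h1 : t 1 = 2)
    (hcentral : ∀ g h : Γ, t (g * h) = t (h * g))
    (htracedet : ∀ g h : Γ, t (g * h) + t (g⁻¹ * h) = t g * t h) (γ : Γ) :
    (t γ = 0 → ∀ u : Γ, t (γ ^ 2 * u) = t u) ∧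
    ((∀ u : Γ, t (γ ^ 2 * u) = t u) → ∀ h : Γ, t γ * t h = 0) := by
  have key : ∀ u : Γ, t (γ ^ 2 * u) + t u = t γ * t (γ * u) := by
    intro u
    have := htracedet γ (γ * u)
    have e1 : γ * (γ * u) = γ ^ 2 * u := by rw [pow_two, mul_assoc]
    have e2 : γ⁻¹ * (γ * u) = u := by group
    rwa [e1, e2] at this
  have two : (2 : B) = 0 := by
    have := CharP.cast_eq_zero B 2; simpa using this
  constructor
  · intro hγ u
    have := key u
    rw [hγ, zero_mul] at this
    have h2 : t (γ ^ 2 * u) + t u + t u = t u := by rw [this]; ring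
    calc t (γ ^ 2 * u) = t (γ ^ 2 * u) + (1+1) * t u - 2 * t u := by ring
      _ = t u := by rw [two]; ring_nf; linear_combination h2
  · intro hk h
    have := key (γ⁻¹ * h)
    rw [hk] at this
    have e3 : γ * (γ⁻¹ * h) = h := by group
    rw [e3] at this
    have : t γ * t h = 2 * t (γ⁻¹ * h) := by linear_combination -this
    rw [this, two, zero_mul]
end

section
/- Theorem 5.1 (Bellaïche's combinatorial lemma): Let a ≥ 1 be a natural number, let d = d(a) be the number of binary digits of a, let u = u(a) be the number of ones in the binary expansion of a, let z = z(a) = d − u be the number of zeros among those digits, and let v = v(a) be the 2-adic valuation of a. Then there exists a subset R of {0, 1, …, 2^{d+1} − 1} of cardinality 2^{z − v + 1} such that for every natural number n, the coefficient of X^a in the Dickson polynomial Polynomial.dickson 1 1 n over ZMod 2 equals 1 if and only if n mod 2^{d+1} lies in R. -/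
/-!
Write `a = k + 1`. By Pascal's rule against the recurrence `S (n + 2) = X * S (n + 1) + S n`,
the coefficient of `X ^ a` in `S n` is `(n / 2 + k / 2).choose k` when `n ≡ a [MOD 2]` and `0`
otherwise. By Lucas's theorem this is odd iff the binary digits of `k` occur among those of
`n / 2 + k / 2`, which for `k < 2 ^ d` depends only on `n / 2 % 2 ^ d`. Over one period
`2 ^ (d + 1)` of `n`, the `n` of the right parity have `n / 2` running once through the residues
mod `2 ^ d`, so the count is the number of `m < 2 ^ d` whose digits contain those of `k`, namely
`2 ^ (d - u(k))`. Finally `u(k) = u(a) + v(a) - 1` by Legendre's formula for `v(a!)`.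
-/

open Finset

namespace Nat

theorem odd_choose_iff_bitIndices_subset (m k : ℕ) :
    Odd (m.choose k) ↔ k.bitIndices ⊆ m.bitIndices := by
  suffices Odd (m.choose k) ↔ ∀ i, k.testBit i → m.testBit i by
    simpa only [List.subset_def, mem_bitIndices]
  induction k using Nat.strong_induction_on generalizing m with
  | _ k ih =>
  rcases k.eq_zero_or_pos with rfl | hk
  · simp
  have lucas := Choose.choose_modEq_choose_mod_mul_choose_div_nat (n := m) (k := k) (p := 2)
  have lowest_digit : Odd ((m % 2).choose (k % 2)) ↔ (k.testBit 0 → m.testBit 0) := by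
    rcases mod_two_eq_zero_or_one m with hm | hm <;>
      rcases mod_two_eq_zero_or_one k with hk' | hk' <;> simp [testBit_zero, hm, hk']
  rw [odd_iff, lucas, ← odd_iff, odd_mul, lowest_digit, ih (k / 2) (by omega),
    ← and_forall_add_one (p := fun i => k.testBit i → m.testBit i)]
  simp only [testBit_add_one]

theorem lt_two_pow_iff_toFinset_bitIndices_subset_range {m d : ℕ} :
    m < 2 ^ d ↔ m.bitIndices.toFinset ⊆ range d := by
  simp only [subset_iff, List.mem_toFinset, mem_bitIndices, mem_range]
  refine ⟨fun hm i hi => ?_, fun h => lt_pow_two_of_testBit m fun i hi => ?_⟩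
  · by_contra! hdi
    simp [testBit_eq_false_of_lt (hm.trans_le (Nat.pow_le_pow_right two_pos hdi))] at hi
  · by_contra hb
    exact absurd (h (by simpa using hb)) (by omega)

theorem periodic_bitIndices_subset {k d : ℕ} (hk : k < 2 ^ d) :
    Function.Periodic (fun m => k.bitIndices ⊆ m.bitIndices) (2 ^ d) := by
  have hmod (m : ℕ) :
      k.bitIndices ⊆ (m % 2 ^ d).bitIndices ↔ k.bitIndices ⊆ m.bitIndices := by
    simp only [List.subset_def, mem_bitIndices, testBit_mod_two_pow, Bool.and_eq_true,
      decide_eq_true_eq]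
    refine forall_congr' fun i => imp_congr_right fun hi => and_iff_right ?_
    exact mem_range.mp (lt_two_pow_iff_toFinset_bitIndices_subset_range.mp hk (by simpa using hi))
  intro m
  simp only [← hmod m, ← hmod (m + 2 ^ d), add_mod_right]

theorem card_filter_bitIndices_subset {k d : ℕ} (hk : k < 2 ^ d) :
    #{m ∈ range (2 ^ d) | k.bitIndices ⊆ m.bitIndices} = 2 ^ (d - k.bitIndices.length) := by
  have hIcc := card_Icc_finset (lt_two_pow_iff_toFinset_bitIndices_subset_range.mp hk)
  rw [card_range, List.toFinset_card_of_nodup bitIndices_nodup] at hIcc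
  rw [← hIcc]
  refine card_nbij' (fun m => m.bitIndices.toFinset) (fun s => ∑ i ∈ s, 2 ^ i) ?_ ?_ ?_ ?_
  · intro m hm
    simp only [coe_filter, mem_range, Set.mem_ofPred_eq] at hm
    simp only [coe_Icc, Set.mem_Icc]
    refine ⟨fun i hi => ?_, lt_two_pow_iff_toFinset_bitIndices_subset_range.mp hm.1⟩
    simpa using hm.2 (List.mem_toFinset.mp hi)
  · intro s hs
    simp only [coe_Icc, Set.mem_Icc] at hs
    simp only [coe_filter, mem_range, Set.mem_ofPred_eq]
    refine ⟨lt_two_pow_iff_toFinset_bitIndices_subset_range.mpr (by simpa using hs.2),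
      fun i hi => ?_⟩
    rw [← List.mem_toFinset, toFinset_bitIndices_sum_two_pow]
    exact hs.1 (List.mem_toFinset.mpr hi)
  · intro m _; exact sum_toFinset_bitIndices_two_pow m
  · intro s _; exact toFinset_bitIndices_sum_two_pow s

theorem length_bitIndices (n : ℕ) : n.bitIndices.length = (digits 2 n).count 1 := by
  induction n using Nat.evenOddRec with
  | h0 => simp
  | h_even n ih =>
    rcases n.eq_zero_or_pos with rfl | hn
    · simp
    rw [bitIndices_two_mul, List.length_map, ih, digits_def' one_lt_two (n := 2 * n) (by omega)]
    simp
  | h_odd n ih =>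
    rw [bitIndices_two_mul_add_one, List.length_cons, List.length_map, ih,
      digits_def' one_lt_two (n := 2 * n + 1) (by omega)]
    simp [Nat.mul_add_div]

theorem sum_digits_two (n : ℕ) : (digits 2 n).sum = (digits 2 n).count 1 := by
  induction n using Nat.evenOddRec with
  | h0 => simp
  | h_even n ih =>
    rcases n.eq_zero_or_pos with rfl | hn
    · simp
    rw [digits_def' one_lt_two (n := 2 * n) (by omega)]
    simp [ih]
  | h_odd n ih =>
    rw [digits_def' one_lt_two (n := 2 * n + 1) (by omega)]
    rw [show (2 * n + 1) / 2 = n by omega]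
    simp [ih, add_comm]

theorem padicValNat_two_add_sum_digits (k : ℕ) :
    padicValNat 2 (k + 1) + (digits 2 (k + 1)).sum = (digits 2 k).sum + 1 := by
  have legendre := sub_one_mul_padicValNat_factorial (p := 2) k
  have legendre_succ := sub_one_mul_padicValNat_factorial (p := 2) (k + 1)
  rw [factorial_succ, padicValNat.mul (by omega) (factorial_ne_zero k)] at legendre_succ
  have := digit_sum_le 2 k
  have := digit_sum_le 2 (k + 1)
  simp only [Nat.add_one_sub_one, one_mul] at legendre legendre_succ
  omega

theorem count_one_digits_two_add_padicValNat_le {n : ℕ} (hn : n ≠ 0) :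
    (digits 2 n).count 1 + padicValNat 2 n ≤ (digits 2 n).length := by
  obtain ⟨b, hb⟩ := pow_padicValNat_dvd (p := 2) (n := n)
  have hb0 : 0 < b := Nat.pos_of_ne_zero (by rintro rfl; simp [hn] at hb)
  rw [hb, digits_base_pow_mul one_lt_two hb0, ← hb]
  simp [List.count_replicate, List.count_le_length, add_comm]

theorem count_comp_add_of_periodic {p : ℕ → Prop} [DecidablePred p] {N : ℕ}
    (hp : Function.Periodic p N) (c : ℕ) : count (fun s => p (s + c)) N = count p N := by
  have hIco := map_add_left_Ico 0 N c
  rw [add_zero] at hIco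
  rw [count_eq_card_filter_range, ← filter_Ico_card_eq_of_periodic c N p hp, range_eq_Ico,
    ← hIco, filter_map, card_map]
  simp [add_comm]

theorem count_mod_two_eq_and_div_two {q : ℕ → Prop} [DecidablePred q] {r : ℕ} (hr : r < 2)
    (N : ℕ) : count (fun n => n % 2 = r ∧ q (n / 2)) (2 * N) = count q N := by
  induction N with
  | zero => simp
  | succ N ih =>
    rw [mul_add_one, count_add, ih, count_succ, count_succ, count_zero, count_succ]
    interval_cases r <;> simp [Nat.mul_add_div]

end Nat

namespace Polynomial

variable {R : Type*} [CommRing R] [CharP R 2]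

theorem dickson_one_one_zero_of_charP_two : dickson 1 (1 : R) 0 = 0 := by
  rw [dickson_zero, Nat.cast_one, show (3 : R[X]) - 1 = 2 by norm_num, CharTwo.two_eq_zero]

theorem dickson_one_one_add_two_of_charP_two (n : ℕ) :
    dickson 1 (1 : R) (n + 2) = X * dickson 1 1 (n + 1) + dickson 1 1 n := by
  rw [dickson_add_two, C_1, one_mul, CharTwo.sub_eq_add]

theorem coeff_dickson_one_one_zero_of_charP_two (n : ℕ) : (dickson 1 (1 : R) n).coeff 0 = 0 := by
  induction n using Nat.twoStepInduction with
  | zero => rw [dickson_one_one_zero_of_charP_two, coeff_zero]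
  | one => simp
  | more n ih _ => rw [dickson_one_one_add_two_of_charP_two, coeff_add, ih]; simp

theorem coeff_dickson_one_one_succ_of_charP_two (n k : ℕ) :
    (dickson 1 (1 : R) n).coeff (k + 1) =
      if n % 2 = (k + 1) % 2 then ((n / 2 + k / 2).choose k : R) else 0 := by
  induction n using Nat.twoStepInduction generalizing k with
  | zero =>
    rw [dickson_one_one_zero_of_charP_two, coeff_zero]
    split_ifs with h
    · rw [Nat.choose_eq_zero_of_lt (by omega), Nat.cast_zero]
    · rfl
  | one =>
    rcases k with _ | k
    · simp
    · rw [dickson_one, coeff_X_of_ne_one (by omega)]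
      split_ifs with h
      · rw [Nat.choose_eq_zero_of_lt (by omega), Nat.cast_zero]
      · rfl
  | more n ih₀ ih₁ =>
    rw [dickson_one_one_add_two_of_charP_two, coeff_add, coeff_X_mul]
    rcases k with _ | k
    · simp [coeff_dickson_one_one_zero_of_charP_two, ih₀, Nat.add_mod_right]
    · rw [ih₁, ih₀]
      by_cases h : n % 2 = k % 2
      · rw [if_pos (by omega), if_pos (by omega), if_pos (by omega),
          show (n + 2) / 2 + (k + 1) / 2 = (n / 2 + (k + 1) / 2) + 1 by omega,
          show (n + 1) / 2 + k / 2 = n / 2 + (k + 1) / 2 by omega, Nat.choose_succ_succ',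
          Nat.cast_add]
      · rw [if_neg (by omega), if_neg (by omega), if_neg (by omega), add_zero]

theorem coeff_dickson_one_one_succ_eq_one_iff (n k : ℕ) :
    (dickson 1 (1 : ZMod 2) n).coeff (k + 1) = 1 ↔
      n % 2 = (k + 1) % 2 ∧ k.bitIndices ⊆ (n / 2 + k / 2).bitIndices := by
  rw [coeff_dickson_one_one_succ_of_charP_two]
  split_ifs with h
  · rw [ZMod.natCast_eq_one_iff_odd, Nat.odd_choose_iff_bitIndices_subset]
    simp [h]
  · simp [h]

theorem periodic_coeff_dickson_one_one_eq_one {k d : ℕ} (hk : k < 2 ^ d) :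
    Function.Periodic (fun n => (dickson 1 (1 : ZMod 2) n).coeff (k + 1) = 1) (2 ^ (d + 1)) := by
  intro n
  have hsubset := Nat.periodic_bitIndices_subset hk (n / 2 + k / 2)
  simp only [coeff_dickson_one_one_succ_eq_one_iff, pow_succ', Nat.add_mul_mod_self_left,
    show (n + 2 * 2 ^ d) / 2 + k / 2 = n / 2 + k / 2 + 2 ^ d by omega] at hsubset ⊢
  rw [hsubset]

theorem card_filter_coeff_dickson_one_one_eq_one {k d : ℕ} (hk : k < 2 ^ d) :
    #{n ∈ range (2 ^ (d + 1)) | (dickson 1 (1 : ZMod 2) n).coeff (k + 1) = 1} =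
      2 ^ (d - (Nat.digits 2 k).count 1) := by
  rw [← Nat.count_eq_card_filter_range]
  simp_rw [coeff_dickson_one_one_succ_eq_one_iff]
  rw [pow_succ', Nat.count_mod_two_eq_and_div_two (Nat.mod_lt _ two_pos)
      (q := fun m => k.bitIndices ⊆ (m + k / 2).bitIndices),
    Nat.count_comp_add_of_periodic (Nat.periodic_bitIndices_subset hk),
    Nat.count_eq_card_filter_range, Nat.card_filter_bitIndices_subset hk, Nat.length_bitIndices]

end Polynomial

open Polynomial

/-- Theorem 5.1 (Bellaïche's combinatorial lemma): writing `d`, `u`, `z`, `v` for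
the number of binary digits of `a`, the number of ones, the number of zeros, and
the 2-adic valuation of `a`, the coefficient of `X^a` in the mod-2 Chebyshev
(Dickson) polynomial `S_n` is `1` exactly when `n` lies in one of `2^{z−v+1}`
residue classes modulo `2^{d+1}`. -/
theorem bellaiche_combinatorial_lemma (a : ℕ) (ha : 1 ≤ a) :
    ∃ R : Finset ℕ,
      R ⊆ Finset.range (2 ^ ((Nat.digits 2 a).length + 1)) ∧
      R.card =
        2 ^ (((Nat.digits 2 a).length - (Nat.digits 2 a).count 1)
              - padicValNat 2 a + 1) ∧
      ∀ n : ℕ,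
        ((Polynomial.dickson 1 (1 : ZMod 2) n).coeff a = 1 ↔
          n % 2 ^ ((Nat.digits 2 a).length + 1) ∈ R) := by
  obtain ⟨k, rfl⟩ : ∃ k, a = k + 1 := ⟨a - 1, by omega⟩
  set d := (Nat.digits 2 (k + 1)).length
  have hk : k < 2 ^ d := (Nat.lt_base_pow_length_digits one_lt_two).trans' (lt_add_one k)
  refine ⟨{n ∈ range (2 ^ (d + 1)) | (dickson 1 (1 : ZMod 2) n).coeff (k + 1) = 1},
    filter_subset _ _, ?_, fun n => ?_⟩
  · rw [card_filter_coeff_dickson_one_one_eq_one hk]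
    have hcarry := Nat.padicValNat_two_add_sum_digits k
    have hle := Nat.count_one_digits_two_add_padicValNat_le (n := k + 1) (by omega)
    rw [Nat.sum_digits_two, Nat.sum_digits_two] at hcarry
    congr 1
    omega
  · simp only [mem_filter, mem_range, Nat.mod_lt _ (pow_pos two_pos _), true_and]
    exact ((periodic_coeff_dickson_one_one_eq_one hk).map_mod_nat n).symm.to_iff
end

section
/- Lemma 5.5 (2-adic valuation of binomial coefficients with odd lower index): Let k be an odd natural number and n a natural number with 1 ≤ k ≤ n, and write v = v₂(n) for the 2-adic valuation of n. Then v₂(n) = v₂(binom(n, k)) if and only if one of the following holds: (1) n is odd and every binary digit of n is at least the corresponding binary digit of k (i.e. for all i, if bit i of k is 1 then bit i of n is 1); or (2) n is even, for every i > v the i-th binary digit of n is at least the i-th binary digit of k, and the v-th binary digit of k is 0. -/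
/-!
Since `k` is odd, `n * C(n-1, k-1) = k * C(n, k)` gives
`v₂ C(n, k) = v₂ n + v₂ C(n-1, k-1)`, so the equality holds iff `C(n-1, k-1)` is odd. By Lucas's
theorem modulo 2 this means that every binary digit of `k - 1` is at most the corresponding digit
of `n - 1`. Subtracting one clears the lowest set bit of `n`, which sits at position `v₂ n`, and sets
all bits below it; for odd `k` it only clears bit `0`.
-/

theorem padicValNat_choose_eq_add_of_not_dvd {p n k : ℕ} [Fact p.Prime] (hk : ¬ p ∣ k)
    (hkn : k ≤ n) :
    padicValNat p (n.choose k) = padicValNat p n + padicValNat p ((n - 1).choose (k - 1)) := by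
  obtain ⟨k, rfl⟩ := Nat.exists_eq_add_one_of_ne_zero (by rintro rfl; simp at hk : k ≠ 0)
  obtain ⟨n, rfl⟩ := Nat.exists_eq_add_one_of_ne_zero (by omega : n ≠ 0)
  have hv := congrArg (padicValNat p) (Nat.add_one_mul_choose_eq n k)
  rw [padicValNat.mul (by omega) (Nat.choose_pos (by omega)).ne',
    padicValNat.mul (Nat.choose_pos (by omega)).ne' (by omega),
    padicValNat.eq_zero_of_not_dvd hk] at hv
  simpa using hv.symm

theorem padicValNat_two_eq_padicValNat_choose_iff {n k : ℕ} (hk : Odd k) (hkn : k ≤ n) :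
    padicValNat 2 n = padicValNat 2 (n.choose k) ↔ Odd ((n - 1).choose (k - 1)) := by
  have : Fact (Nat.Prime 2) := ⟨Nat.prime_two⟩
  have hk0 : 1 ≤ k := hk.pos
  rw [padicValNat_choose_eq_add_of_not_dvd hk.not_two_dvd_nat hkn, left_eq_add, padicValNat.eq_zero_iff,
    Nat.odd_iff, ← Nat.two_dvd_ne_zero]
  simp [(Nat.choose_pos (by omega : k - 1 ≤ n - 1)).ne']

namespace Nat

theorem odd_choose_iff_odd_choose_div_two (m j : ℕ) :
    Odd (m.choose j) ↔ (j.testBit 0 → m.testBit 0) ∧ Odd ((m / 2).choose (j / 2)) := by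
  have : Fact (Nat.Prime 2) := ⟨Nat.prime_two⟩
  have hlow : Odd ((m % 2).choose (j % 2)) ↔ (j.testBit 0 → m.testBit 0) := by
    rcases mod_two_eq_zero_or_one m with hm | hm <;> rcases mod_two_eq_zero_or_one j with hj | hj <;>
      simp [hm, hj]
  rw [odd_iff, Choose.choose_modEq_choose_mod_mul_choose_div_nat, ← odd_iff, odd_mul, hlow]

theorem odd_choose_iff_testBit_imp (m j : ℕ) :
    Odd (m.choose j) ↔ ∀ i, j.testBit i → m.testBit i := by
  induction j using Nat.strong_induction_on generalizing m with
  | _ j ih =>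
    rcases eq_or_ne j 0 with rfl | hj
    · simp
    rw [odd_choose_iff_odd_choose_div_two, ih (j / 2) (div_lt_self (pos_of_ne_zero hj) one_lt_two)]
    constructor
    · rintro ⟨h0, hdiv⟩ (_ | i)
      · exact h0
      · simpa only [testBit_div_two] using hdiv i
    · intro h
      exact ⟨h 0, fun i => by simpa only [testBit_div_two] using h (i + 1)⟩

theorem testBit_two_pow_mul_odd_sub_one (e b i : ℕ) :
    (2 ^ e * (2 * b + 1) - 1).testBit i =
      (decide (i < e) || decide (e < i) && (2 ^ e * (2 * b + 1)).testBit i) := by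
  have hpos : 0 < 2 ^ e := by positivity
  have hself : 2 ^ e * (2 * b + 1) = 2 ^ (e + 1) * b + 2 ^ e := by ring
  have hpred : 2 ^ e * (2 * b + 1) - 1 = 2 ^ (e + 1) * b + (2 ^ e - 1) := by
    rw [hself, Nat.add_sub_assoc hpos]
  rw [hpred, hself, testBit_two_pow_mul_add _ (by rw [pow_succ]; omega),
    testBit_two_pow_mul_add _ (by rw [pow_succ]; omega)]
  simp only [testBit_two_pow_sub_one, testBit_two_pow]
  rcases lt_trichotomy i e with h | rfl | h
  · simp [h, lt_succ_of_lt h]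
  · simp
  · simp [h, h.not_gt, not_lt.mpr (succ_le_of_lt h)]

theorem testBit_sub_one_eq {n : ℕ} (hn : n ≠ 0) (i : ℕ) :
    (n - 1).testBit i =
      (decide (i < padicValNat 2 n) || decide (padicValNat 2 n < i) && n.testBit i) := by
  have : Fact (Nat.Prime 2) := ⟨Nat.prime_two⟩
  obtain ⟨e, m, ⟨b, rfl⟩, rfl⟩ := exists_eq_two_pow_mul_odd hn
  have hv : padicValNat 2 (2 ^ e * (2 * b + 1)) = e := by
    rw [padicValNat.mul (by positivity) (by omega), padicValNat.prime_pow,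
      padicValNat.eq_zero_of_not_dvd (by omega), add_zero]
  rw [hv, testBit_two_pow_mul_odd_sub_one]

variable {k n : ℕ}

theorem forall_testBit_sub_one_imp_iff (hk : Odd k) (hn : n ≠ 0) :
    (∀ i, (k - 1).testBit i → (n - 1).testBit i) ↔
      ∀ i, 0 < i → k.testBit i → i < padicValNat 2 n ∨ padicValNat 2 n < i ∧ n.testBit i := by
  have hvk : padicValNat 2 k = 0 := padicValNat.eq_zero_of_not_dvd hk.not_two_dvd_nat
  simp only [testBit_sub_one_eq hk.pos.ne', testBit_sub_one_eq hn, hvk, not_lt_zero, decide_false,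
    Bool.false_or, Bool.and_eq_true, Bool.or_eq_true, decide_eq_true_eq, and_imp]

theorem odd_choose_sub_one_iff_of_odd (hk : Odd k) (hn : Odd n) :
    Odd ((n - 1).choose (k - 1)) ↔ ∀ i, k.testBit i → n.testBit i := by
  have hv : padicValNat 2 n = 0 := padicValNat.eq_zero_of_not_dvd hn.not_two_dvd_nat
  have hn0 : n.testBit 0 = true := by simp [testBit_zero, odd_iff.mp hn]
  rw [odd_choose_iff_testBit_imp, forall_testBit_sub_one_imp_iff hk hn.pos.ne', hv]
  refine ⟨fun h i hki => ?_, fun h i hi hki => Or.inr ⟨hi, h i hki⟩⟩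
  rcases eq_or_ne i 0 with rfl | hi
  · exact hn0
  · exact ((h i (pos_of_ne_zero hi) hki).resolve_left (not_lt_zero i)).2

theorem odd_choose_sub_one_iff_of_even (hk : Odd k) (hn : Even n) (hn0 : n ≠ 0) :
    Odd ((n - 1).choose (k - 1)) ↔
      (∀ i, padicValNat 2 n < i → k.testBit i → n.testBit i) ∧
        k.testBit (padicValNat 2 n) = false := by
  have hv : 0 < padicValNat 2 n := one_le_padicValNat_of_dvd hn0 hn.two_dvd
  rw [odd_choose_iff_testBit_imp, forall_testBit_sub_one_imp_iff hk hn0]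
  constructor
  · intro h
    refine ⟨fun i hi hki => ((h i (by omega) hki).resolve_left hi.not_gt).2, ?_⟩
    rw [Bool.eq_false_iff]
    intro hkv
    rcases h _ hv hkv with h' | h' <;> omega
  · rintro ⟨h, hkv⟩ i hi hki
    rcases lt_trichotomy i (padicValNat 2 n) with hlt | rfl | hgt
    · exact Or.inl hlt
    · simp [hkv] at hki
    · exact Or.inr ⟨hgt, h i hgt hki⟩

end Nat

theorem valuation_choose_odd_lower_general (k n : ℕ) (hk : Odd k)
    (hkn : k ≤ n) :
    padicValNat 2 n = padicValNat 2 (Nat.choose n k) ↔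
      ((Odd n ∧ ∀ i : ℕ, Nat.testBit k i = true → Nat.testBit n i = true) ∨
       (Even n ∧
        (∀ i : ℕ, padicValNat 2 n < i →
          Nat.testBit k i = true → Nat.testBit n i = true) ∧
        Nat.testBit k (padicValNat 2 n) = false)) := by
  rw [padicValNat_two_eq_padicValNat_choose_iff hk hkn]
  rcases Nat.even_or_odd n with hn | hn
  · have hn0 : n ≠ 0 := (hk.pos.trans_le hkn).ne'
    simp only [Nat.odd_choose_sub_one_iff_of_even hk hn hn0, hn, Nat.not_odd_iff_even.mpr hn,
      true_and, false_and, false_or]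
  · simp only [Nat.odd_choose_sub_one_iff_of_odd hk hn, hn, Nat.not_even_iff_odd.mpr hn,
      true_and, false_and, or_false]

/-- Lemma 5.5: for `k` odd with `1 ≤ k ≤ n` and `v = v₂(n)`, one has
`v₂(n) = v₂(C(n, k))` iff either `n` is odd and every binary digit of `n` is at
least the corresponding digit of `k`, or `n` is even, the digits of `n` dominate
those of `k` in all places above `v`, and the `v`-th digit of `k` is `0`. -/
theorem valuation_choose_odd_lower (k n : ℕ) (hk : Odd k) (hk1 : 1 ≤ k)
    (hkn : k ≤ n) :
    padicValNat 2 n = padicValNat 2 (Nat.choose n k) ↔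
      ((Odd n ∧ ∀ i : ℕ, Nat.testBit k i = true → Nat.testBit n i = true) ∨
       (Even n ∧
        (∀ i : ℕ, padicValNat 2 n < i →
          Nat.testBit k i = true → Nat.testBit n i = true) ∧
        Nat.testBit k (padicValNat 2 n) = false)) :=
  valuation_choose_odd_lower_general k n hk hkn
end
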